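/- Let m₁, m₂ ∈ ℝ^d with m₁ ≠ m₂, σ > 0 and γ ≥ 1, and set β := ‖m₁ − m₂‖/σ. Then the E_γ-divergence between the isotropic Gaussian measures N(m₁, σ²I_d) and N(m₂, σ²I_d) equals Q(log γ / β − β/2) − γ·Q(log γ / β + β/2), where Q(t) := ∫_t^∞ (1/√(2π))·e^{−u²/2} du is the standard Gaussian tail function. -/

import Mathlib

open MeasureTheory ProbabilityTheory Real

noncomputable def Egamma {Y : Type*} [MeasurableSpace Y] (γ : ℝ) (P Q : Measure Y) : ℝ :=
  ⨆ A : {A : Set Y // MeasurableSet A}, ((P A.1).toReal - γ * (Q A.1).toReal)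

/-- The isotropic Gaussian measure `N(m, σ²·I_d)` on `ℝ^d`. -/
noncomputable def gaussianE (d : ℕ) (m : EuclideanSpace ℝ (Fin d)) (σ : ℝ) :
    Measure (EuclideanSpace ℝ (Fin d)) :=
  volume.withDensity fun t =>
    ENNReal.ofReal ((2 * π * σ ^ 2) ^ (-(d : ℝ) / 2) * Real.exp (-‖t - m‖ ^ 2 / (2 * σ ^ 2)))

/-- The standard Gaussian tail function `Q(t) = ∫_t^∞ (1/√(2π)) e^{-u²/2} du`. -/
noncomputable def gaussQ (t : ℝ) : ℝ :=
  ∫ u in Set.Ioi t, (1 / Real.sqrt (2 * π)) * Real.exp (-u ^ 2 / 2)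

/-!
By the Neyman–Pearson argument, the supremum defining `E_γ(P‖Q)` is attained at the
likelihood-ratio set `{γ q ≤ p}`: on it `P - γQ` is nonnegative, off it nonpositive. For two
Gaussians with the same covariance `σ²I` this set is the half-space
`{t | σ² log γ - ‖m₁ - m₂‖²/2 ≤ ⟪m₁ - m₂, t - m₁⟫}`. Since `N(m, σ²I)` is the image of the standard
Gaussian under `x ↦ m + σx`, the projection `t ↦ ⟪w, t - m⟫` has law `N(0, σ²‖w‖²)`, so both
half-space probabilities are Gaussian tails, namely `Q(log γ/β ∓ β/2)`.
-/

open scoped RealInnerProductSpace ENNReal NNReal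

section NeymanPearson

variable {Y : Type*} [MeasurableSpace Y] {P Q : Measure Y} [IsFiniteMeasure P] [IsFiniteMeasure Q]
  {γ : ℝ} {A : Set Y}

theorem Egamma_eq_of_restrict_le (hγ : 0 ≤ γ) (hA : MeasurableSet A)
    (h_in : (ENNReal.ofReal γ • Q).restrict A ≤ P.restrict A)
    (h_out : P.restrict Aᶜ ≤ (ENNReal.ofReal γ • Q).restrict Aᶜ) :
    Egamma γ P Q = (P A).toReal - γ * (Q A).toReal := by
  set D : Set Y → ℝ := fun S ↦ (P S).toReal - γ * (Q S).toReal
  have D_split (S : Set Y) {T : Set Y} (hT : MeasurableSet T) : D S = D (S ∩ T) + D (S \ T) := by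
    simp only [D, ← measure_inter_add_sdiff S hT,
      ENNReal.toReal_add (measure_ne_top _ _) (measure_ne_top _ _)]
    ring
  have restrict_toReal {R : Measure Y} {S B : Set Y} (hSB : S ⊆ B) (hB : MeasurableSet B) :
      ((ENNReal.ofReal γ • R).restrict B S).toReal = γ * (R S).toReal := by
    rw [Measure.restrict_apply' hB, Set.inter_eq_left.2 hSB, Measure.smul_apply, smul_eq_mul,
      ENNReal.toReal_mul, ENNReal.toReal_ofReal hγ]
  have D_nonneg {S : Set Y} (hS : S ⊆ A) : 0 ≤ D S := by
    have := ENNReal.toReal_mono (measure_ne_top _ _) (h_in S)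
    rw [restrict_toReal hS hA, Measure.restrict_apply' hA, Set.inter_eq_left.2 hS] at this
    linarith
  have D_nonpos {S : Set Y} (hS : S ⊆ Aᶜ) : D S ≤ 0 := by
    have := ENNReal.toReal_mono
      (by simp [Measure.restrict_apply' hA.compl, ENNReal.mul_eq_top]) (h_out S)
    rw [restrict_toReal hS hA.compl, Measure.restrict_apply' hA.compl,
      Set.inter_eq_left.2 hS] at this
    linarith
  have D_le (B : {B : Set Y // MeasurableSet B}) : D B.1 ≤ D A := by
    rw [D_split B.1 hA, D_split A B.2, Set.inter_comm A]
    linarith [D_nonneg (Set.sdiff_subset (s := A) (t := B.1)),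
      D_nonpos (S := B.1 \ A) fun _ hy ↦ hy.2]
  exact le_antisymm (ciSup_le D_le) (le_ciSup ⟨D A, Set.forall_mem_range.2 D_le⟩ ⟨A, hA⟩)

theorem Egamma_withDensity {μ : Measure Y} {f g : Y → ℝ≥0∞} (hf : Measurable f)
    (hg : Measurable g) [IsFiniteMeasure (μ.withDensity f)] [IsFiniteMeasure (μ.withDensity g)]
    (hγ : 0 ≤ γ) :
    Egamma γ (μ.withDensity f) (μ.withDensity g) =
      (μ.withDensity f {y | ENNReal.ofReal γ * g y ≤ f y}).toReal
        - γ * (μ.withDensity g {y | ENNReal.ofReal γ * g y ≤ f y}).toReal := by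
  have hA : MeasurableSet {y | ENNReal.ofReal γ * g y ≤ f y} :=
    measurableSet_le (hg.const_mul _) hf
  refine Egamma_eq_of_restrict_le hγ hA ?_ ?_ <;>
    simp only [← withDensity_smul' _ _ ENNReal.ofReal_ne_top, restrict_withDensity hA,
      restrict_withDensity hA.compl]
  · exact withDensity_mono (ae_restrict_of_forall_mem hA fun _ hy ↦ hy)
  · exact withDensity_mono (ae_restrict_of_forall_mem hA.compl fun _ hy ↦ le_of_lt (not_le.1 hy))

end NeymanPearson

theorem MeasureTheory.Measure.pi_withDensity_ofReal {ι : Type*} [Fintype ι] {X : ι → Type*}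
    [∀ i, MeasurableSpace (X i)] {μ : ∀ i, Measure (X i)} [∀ i, SigmaFinite (μ i)]
    {p : ∀ i, X i → ℝ} (hp : ∀ i, Integrable (p i) (μ i)) (hp0 : ∀ i, 0 ≤ p i) :
    Measure.pi (fun i ↦ (μ i).withDensity fun x ↦ ENNReal.ofReal (p i x)) =
      (Measure.pi μ).withDensity fun x ↦ ENNReal.ofReal (∏ i, p i (x i)) := by
  have (i : ι) : IsFiniteMeasure ((μ i).withDensity fun x ↦ ENNReal.ofReal (p i x)) :=
    isFiniteMeasure_withDensity_ofReal (hp i).2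
  refine Measure.pi_eq fun s hs ↦ ?_
  rw [withDensity_apply _ (MeasurableSet.univ_pi hs), Measure.restrict_pi_pi,
    ← ofReal_integral_eq_lintegral_ofReal (Integrable.fintype_prod_dep fun i ↦ (hp i).restrict)
      (ae_of_all _ fun x ↦ Finset.prod_nonneg fun i _ ↦ hp0 i (x i)),
    integral_fintype_prod_eq_prod, ENNReal.ofReal_prod_of_nonneg fun i _ ↦
      integral_nonneg (hp0 i)]
  refine Finset.prod_congr rfl fun i _ ↦ ?_
  rw [withDensity_apply _ (hs i),
    ofReal_integral_eq_lintegral_ofReal (hp i).restrict (ae_of_all _ (hp0 i))]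

theorem gaussQ_nonneg (a : ℝ) : 0 ≤ gaussQ a :=
  integral_nonneg fun _ ↦ by positivity

theorem gaussianReal_map_const_add_const_mul (a c : ℝ) :
    (gaussianReal 0 1).map (fun y ↦ a + c * y) = gaussianReal a (‖c‖₊ ^ 2) := by
  rw [← Function.comp_def (a + ·) (c * ·), ← Measure.map_map (by fun_prop) (by fun_prop),
    gaussianReal_map_const_mul, gaussianReal_map_const_add]
  congr 1
  · ring
  · ext; simp

theorem gaussianReal_zero_one_Ici (a : ℝ) :
    gaussianReal 0 1 (Set.Ici a) = ENNReal.ofReal (gaussQ a) := by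
  rw [gaussianReal_apply_eq_integral 0 one_ne_zero, integral_Ici_eq_integral_Ioi, gaussQ]
  simp [gaussianPDFReal]

theorem gaussianReal_zero_Ici (s : ℝ≥0) (hs : s ≠ 0) (c : ℝ) :
    gaussianReal 0 (s ^ 2) (Set.Ici c) = ENNReal.ofReal (gaussQ (c / s)) := by
  have h_map := gaussianReal_map_const_add_const_mul 0 s
  simp only [zero_add, NNReal.nnnorm_eq] at h_map
  have h_pre : (fun y : ℝ ↦ (s : ℝ) * y) ⁻¹' Set.Ici c = Set.Ici (c / s) := by
    ext; simp [div_le_iff₀' (NNReal.coe_pos.2 (pos_iff_ne_zero.2 hs))]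
  rw [← h_map, Measure.map_apply (by fun_prop) measurableSet_Ici, h_pre, gaussianReal_zero_one_Ici]

section Gaussian

variable {d : ℕ} {σ : ℝ}

noncomputable def gaussianDensity (d : ℕ) (m : EuclideanSpace ℝ (Fin d)) (σ : ℝ)
    (t : EuclideanSpace ℝ (Fin d)) : ℝ :=
  (2 * π * σ ^ 2) ^ (-(d : ℝ) / 2) * Real.exp (-‖t - m‖ ^ 2 / (2 * σ ^ 2))

theorem gaussianE_eq_withDensity (m : EuclideanSpace ℝ (Fin d)) :
    gaussianE d m σ = volume.withDensity fun t ↦ ENNReal.ofReal (gaussianDensity d m σ t) :=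
  rfl

theorem gaussianDensity_nonneg (m t : EuclideanSpace ℝ (Fin d)) :
    0 ≤ gaussianDensity d m σ t := by
  unfold gaussianDensity; positivity

theorem measurable_gaussianDensity (m : EuclideanSpace ℝ (Fin d)) :
    Measurable (gaussianDensity d m σ) := by
  unfold gaussianDensity; fun_prop

theorem prod_gaussianPDFReal (m : EuclideanSpace ℝ (Fin d)) (x : Fin d → ℝ) :
    ∏ i, gaussianPDFReal (m i) (‖σ‖₊ ^ 2) (x i) = gaussianDensity d m σ (WithLp.toLp 2 x) := by
  have h2π : 0 ≤ 2 * π * σ ^ 2 := by positivity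
  simp only [gaussianPDFReal, NNReal.coe_pow, coe_nnnorm, Real.norm_eq_abs, sq_abs,
    Finset.prod_mul_distrib, Finset.prod_const, Finset.card_univ, Fintype.card_fin,
    ← Real.exp_sum, gaussianDensity]
  congr 1
  · rw [Real.sqrt_eq_rpow, ← Real.rpow_neg h2π, ← Real.rpow_natCast, ← Real.rpow_mul h2π]
    ring_nf
  · rw [EuclideanSpace.norm_sq_eq, ← Finset.sum_div, ← Finset.sum_neg_distrib]
    simp

theorem gaussianE_eq_map_pi (hσ : σ ≠ 0) (m : EuclideanSpace ℝ (Fin d)) :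
    gaussianE d m σ = (Measure.pi fun i ↦ gaussianReal (m i) (‖σ‖₊ ^ 2)).map (WithLp.toLp 2) := by
  have hv : ‖σ‖₊ ^ 2 ≠ 0 := pow_ne_zero 2 (nnnorm_ne_zero_iff.2 hσ)
  simp only [gaussianReal_of_var_ne_zero _ hv, gaussianPDF_def]
  rw [Measure.pi_withDensity_ofReal (fun _ ↦ integrable_gaussianPDFReal _ _)
    (fun _ ↦ gaussianPDFReal_nonneg _ _), ← volume_pi]
  ext s hs
  rw [gaussianE_eq_withDensity, Measure.map_apply (by fun_prop) hs, withDensity_apply _ hs,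
    withDensity_apply _ (hs.preimage (by fun_prop)),
    ← (PiLp.volume_preserving_toLp (Fin d)).setLIntegral_comp_preimage_emb
      (MeasurableEquiv.toLp 2 _).measurableEmbedding]
  simp_rw [prod_gaussianPDFReal]

theorem gaussianE_eq_map_stdGaussian (hσ : σ ≠ 0) (m : EuclideanSpace ℝ (Fin d)) :
    gaussianE d m σ = (stdGaussian (EuclideanSpace ℝ (Fin d))).map (fun x ↦ m + σ • x) := by
  have h_comp : (fun x ↦ m + σ • x) ∘ WithLp.toLp 2 =
      WithLp.toLp 2 ∘ fun (x : Fin d → ℝ) i ↦ m i + σ * x i := by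
    ext; simp
  rw [gaussianE_eq_map_pi hσ, ← map_pi_eq_stdGaussian,
    Measure.map_map (by fun_prop) (by fun_prop), h_comp,
    ← Measure.map_map (by fun_prop) (by fun_prop),
    Measure.pi_map_pi (f := fun i y ↦ m i + σ * y) fun _ ↦ by fun_prop]
  simp_rw [gaussianReal_map_const_add_const_mul]

theorem isProbabilityMeasure_gaussianE (hσ : σ ≠ 0) (m : EuclideanSpace ℝ (Fin d)) :
    IsProbabilityMeasure (gaussianE d m σ) := by
  rw [gaussianE_eq_map_stdGaussian hσ]
  exact Measure.isProbabilityMeasure_map (by fun_prop)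

theorem map_inner_sub_gaussianE (hσ : σ ≠ 0) (m w : EuclideanSpace ℝ (Fin d)) :
    (gaussianE d m σ).map (fun t ↦ ⟪w, t - m⟫) = gaussianReal 0 (‖σ • w‖₊ ^ 2) := by
  have h_comp : (fun t ↦ ⟪w, t - m⟫) ∘ (fun x ↦ m + σ • x) = innerSL ℝ (σ • w) := by
    ext; simp [inner_smul_right]
  rw [gaussianE_eq_map_stdGaussian hσ, Measure.map_map (by fun_prop) (by fun_prop), h_comp,
    IsGaussian.map_eq_gaussianReal, integral_strongDual_stdGaussian, variance_dual_stdGaussian,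
    innerSL_apply_norm]
  congr 1
  ext; simp

theorem gaussianE_setOf_le_inner_sub (hσ : 0 < σ) (m p : EuclideanSpace ℝ (Fin d))
    {w : EuclideanSpace ℝ (Fin d)} (hw : w ≠ 0) (c : ℝ) :
    gaussianE d m σ {t | c ≤ ⟪w, t - p⟫} =
      ENNReal.ofReal (gaussQ ((c + ⟪w, p - m⟫) / (σ * ‖w‖))) := by
  have h_set : {t | c ≤ ⟪w, t - p⟫} = (fun t ↦ ⟪w, t - m⟫) ⁻¹' Set.Ici (c + ⟪w, p - m⟫) := by
    ext t
    rw [Set.mem_preimage, Set.mem_Ici, ← sub_add_sub_cancel t p m, inner_add_right,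
      add_le_add_iff_right, Set.mem_ofPred_eq]
  have hσw : ‖σ • w‖₊ ≠ 0 := nnnorm_ne_zero_iff.2 (smul_ne_zero hσ.ne' hw)
  rw [h_set, ← Measure.map_apply (by fun_prop) measurableSet_Ici, map_inner_sub_gaussianE hσ.ne',
    gaussianReal_zero_Ici _ hσw, coe_nnnorm, norm_smul, Real.norm_of_nonneg hσ.le]

theorem setOf_ofReal_mul_gaussianDensity_le (hσ : σ ≠ 0) {γ : ℝ} (hγ : 0 < γ)
    (m₁ m₂ : EuclideanSpace ℝ (Fin d)) :
    {t | ENNReal.ofReal γ * ENNReal.ofReal (gaussianDensity d m₂ σ t) ≤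
        ENNReal.ofReal (gaussianDensity d m₁ σ t)} =
      {t | σ ^ 2 * Real.log γ - ‖m₁ - m₂‖ ^ 2 / 2 ≤ ⟪m₁ - m₂, t - m₁⟫} := by
  ext t
  have h_norm : ‖t - m₂‖ ^ 2 = ‖t - m₁‖ ^ 2 + 2 * ⟪m₁ - m₂, t - m₁⟫ + ‖m₁ - m₂‖ ^ 2 := by
    rw [show t - m₂ = (t - m₁) + (m₁ - m₂) by abel, norm_add_sq_real, real_inner_comm]
  have h_diff : ⟪m₁ - m₂, t - m₁⟫ - (σ ^ 2 * Real.log γ - ‖m₁ - m₂‖ ^ 2 / 2) =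
      σ ^ 2 * (-‖t - m₁‖ ^ 2 / (2 * σ ^ 2) - (Real.log γ + -‖t - m₂‖ ^ 2 / (2 * σ ^ 2))) := by
    rw [h_norm]; field_simp; ring
  simp only [Set.mem_ofPred_eq]
  rw [← ENNReal.ofReal_mul hγ.le, ENNReal.ofReal_le_ofReal_iff (gaussianDensity_nonneg _ _),
    gaussianDensity, gaussianDensity, mul_left_comm,
    mul_le_mul_iff_right₀ (Real.rpow_pos_of_pos (by positivity) _), ← Real.exp_log hγ,
    ← Real.exp_add, Real.exp_le_exp, Real.log_exp, ← sub_nonneg,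
    ← sub_nonneg (b := σ ^ 2 * Real.log γ - _), h_diff,
    mul_nonneg_iff_of_pos_left (by positivity)]

end Gaussian

/-- The `E_γ`-divergence between two isotropic Gaussians with the same
covariance `σ²·I_d`:  with `β = ‖m₁ − m₂‖/σ`,
`E_γ(N(m₁,σ²I) ‖ N(m₂,σ²I)) = Q(log γ/β − β/2) − γ·Q(log γ/β + β/2)`. -/
theorem Egamma_gaussian (d : ℕ) (m₁ m₂ : EuclideanSpace ℝ (Fin d)) (hm : m₁ ≠ m₂)
    (σ γ : ℝ) (hσ : 0 < σ) (hγ : 1 ≤ γ) :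
    Egamma γ (gaussianE d m₁ σ) (gaussianE d m₂ σ) =
      gaussQ (Real.log γ / (‖m₁ - m₂‖ / σ) - (‖m₁ - m₂‖ / σ) / 2)
        - γ * gaussQ (Real.log γ / (‖m₁ - m₂‖ / σ) + (‖m₁ - m₂‖ / σ) / 2) := by
  have hγ0 : 0 < γ := zero_lt_one.trans_le hγ
  have hv : m₁ - m₂ ≠ 0 := sub_ne_zero.2 hm
  have h₁ := isProbabilityMeasure_gaussianE hσ.ne' m₁
  have h₂ := isProbabilityMeasure_gaussianE hσ.ne' m₂
  simp only [gaussianE_eq_withDensity] at h₁ h₂ ⊢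
  rw [Egamma_withDensity (measurable_gaussianDensity m₁).ennreal_ofReal
      (measurable_gaussianDensity m₂).ennreal_ofReal hγ0.le,
    setOf_ofReal_mul_gaussianDensity_le hσ.ne' hγ0, ← gaussianE_eq_withDensity,
    ← gaussianE_eq_withDensity, gaussianE_setOf_le_inner_sub hσ _ _ hv,
    gaussianE_setOf_le_inner_sub hσ _ _ hv, ENNReal.toReal_ofReal (gaussQ_nonneg _),
    ENNReal.toReal_ofReal (gaussQ_nonneg _), sub_self, inner_zero_right,
    real_inner_self_eq_norm_sq]
  congr 3 <;> field_simp <;> ring
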